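/- arXiv:2103.16629 — 6 statements merged into one kernel-verified Lean document; each statement's English description precedes it below -/
import Mathlib

section
/- Let γ ∈ (0,1) and let π̂ : ℝⁿ → ℝᵐ be a feedback policy that is Lipschitz on ℝⁿ with constant ℓ_{π̂}. For δ ∈ ℝⁿ define the perturbed policy π̂_δ(x) = π̂(x + δ). Assume: (i) for every δ with ‖δ‖ ≤ ζ the closed-loop maps f_{π̂} and f_{π̂_δ} map B_r(0) into itself, and the value functions V^{π̂} and V^{π̂_δ} are well defined and bounded on B_r(0); (ii) the stage cost c is Lipschitz in the control with constant ℓ_c^u and the dynamics f is Lipschitz in the control with constant ℓ_f^u; (iii) V^{π̂} is Lipschitz on B_r(0) with constant ℓ_{V^{π̂}}. Then sup { V^{π̂_δ}(x) − V^{π̂}(x) : x ∈ B_r(0), ‖δ‖ ≤ ζ } ≤ ((ℓ_c^u + γ ℓ_{V^{π̂}} ℓ_f^u)/(1 − γ)) · ℓ_{π̂} ζ. -/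
/-!
STATEMENT 3: Robustness to measurement perturbations. For a Lipschitz learned policy `π̂`
with constant `ℓ_π̂` and perturbed policies `π̂_δ(x) = π̂(x+δ)` with `‖δ‖ ≤ ζ`, under the
stated invariance, well-definedness/boundedness, and Lipschitz assumptions,
`sup { V^{π̂_δ}(x) − V^{π̂}(x) : x ∈ B_r(0), ‖δ‖ ≤ ζ } ≤ ((ℓ_c^u + γ ℓ_{V^π̂} ℓ_f^u)/(1−γ)) ℓ_π̂ ζ`.
-/

open Metric

/-- The closed-loop map `f_π(x) = f(x, π(x))`. -/
def cloop {E U : Type*} (f : E → U → E) (π : E → U) : E → E := fun x => f x (π x)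

/-- The discounted value function `V^π(x) = ∑_t γ^t c(f_π^t(x), π(f_π^t(x)))`. -/
noncomputable def Vval {E U : Type*} (f : E → U → E) (c : E → U → ℝ) (γ : ℝ)
    (π : E → U) (x : E) : ℝ :=
  ∑' t : ℕ, γ ^ t * c ((cloop f π)^[t] x) (π ((cloop f π)^[t] x))

/-!
Fix a perturbation `δ` and let `D = V^{π̂_δ} - V^{π̂}` on the ball. Unrolling one step of the
Bellman equation for both policies,
`D x = [c(x, π̂_δ x) - c(x, π̂ x)] + γ [V^{π̂}(f_{π̂_δ} x) - V^{π̂}(f_{π̂} x)] + γ D(f_{π̂_δ} x)`.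
The first two terms are at most `K = (ℓ_c^u + γ ℓ_V ℓ_f^u) ℓ_π̂ ζ` by the Lipschitz assumptions,
and `f_{π̂_δ}` keeps the ball invariant, so `sup D ≤ K + γ sup D`, i.e. `sup D ≤ K / (1 - γ)`.
-/

open Set

theorem Vval_eq_add_mul_Vval_cloop {E U : Type*} (f : E → U → E) (c : E → U → ℝ) (γ : ℝ)
    (π : E → U) (x : E)
    (h : Summable fun t : ℕ => γ ^ t * c ((cloop f π)^[t] x) (π ((cloop f π)^[t] x))) :
    Vval f c γ π x = c x (π x) + γ * Vval f c γ π (cloop f π x) := by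
  unfold Vval
  rw [h.tsum_eq_zero_add]
  simp only [pow_zero, one_mul, Function.iterate_zero_apply, Function.iterate_succ_apply,
    pow_succ', mul_assoc]
  rw [tsum_mul_left]

theorem Set.MapsTo.le_div_one_sub_of_le_add_mul {α : Type*} {B : Set α} {g : α → α}
    (hg : MapsTo g B B) {D : α → ℝ} (hD : BddAbove (D '' B)) {K γ : ℝ} (hγ0 : 0 ≤ γ)
    (hγ1 : γ < 1) (h : ∀ y ∈ B, D y ≤ K + γ * D (g y)) {x : α} (hx : x ∈ B) :
    D x ≤ K / (1 - γ) := by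
  set S := sSup (D '' B)
  have hle_S : ∀ y ∈ B, D y ≤ S := fun y hy => le_csSup hD (mem_image_of_mem D hy)
  have hS : S ≤ K + γ * S := csSup_le ⟨D x, mem_image_of_mem D hx⟩ <| by
    rintro _ ⟨y, hy, rfl⟩
    exact (h y hy).trans (by gcongr; exact hle_S _ (hg hy))
  rw [le_div_iff₀ (by linarith)]
  nlinarith [hle_S x hx]

section Perturbation

variable {E U : Type*} [SeminormedAddCommGroup E] [SeminormedAddCommGroup U]
  {f : E → U → E} {c : E → U → ℝ} {γ : ℝ} {π π' : E → U}

theorem Vval_sub_Vval_le (hγ : 0 ≤ γ) {B : Set E} {x : E} (hx : x ∈ B)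
    (hπB : MapsTo (cloop f π) B B) (hπ'B : MapsTo (cloop f π') B B)
    (hs : Summable fun t : ℕ => γ ^ t * c ((cloop f π)^[t] x) (π ((cloop f π)^[t] x)))
    (hs' : Summable fun t : ℕ => γ ^ t * c ((cloop f π')^[t] x) (π' ((cloop f π')^[t] x)))
    {ℓcu ℓfu ℓV ε : ℝ} (hℓcu : 0 ≤ ℓcu) (hℓfu : 0 ≤ ℓfu) (hℓV : 0 ≤ ℓV)
    (hc_lip : ∀ u₁ u₂, |c x u₁ - c x u₂| ≤ ℓcu * ‖u₁ - u₂‖)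
    (hf_lip : ∀ u₁ u₂, ‖f x u₁ - f x u₂‖ ≤ ℓfu * ‖u₁ - u₂‖)
    (hV_lip : ∀ y ∈ B, ∀ z ∈ B, |Vval f c γ π y - Vval f c γ π z| ≤ ℓV * ‖y - z‖)
    (hε : ‖π' x - π x‖ ≤ ε) :
    Vval f c γ π' x - Vval f c γ π x ≤ (ℓcu + γ * ℓV * ℓfu) * ε +
      γ * (Vval f c γ π' (cloop f π' x) - Vval f c γ π (cloop f π' x)) := by
  have hΔc : c x (π' x) - c x (π x) ≤ ℓcu * ε :=
    (le_abs_self _).trans <| (hc_lip _ _).trans <| by gcongr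
  have hΔf : ‖cloop f π' x - cloop f π x‖ ≤ ℓfu * ε :=
    (hf_lip _ _).trans <| by gcongr
  have hΔV : Vval f c γ π (cloop f π' x) - Vval f c γ π (cloop f π x) ≤ ℓV * (ℓfu * ε) :=
    (le_abs_self _).trans <| (hV_lip _ (hπ'B hx) _ (hπB hx)).trans <| by gcongr
  rw [Vval_eq_add_mul_Vval_cloop f c γ π' x hs', Vval_eq_add_mul_Vval_cloop f c γ π x hs]
  nlinarith [mul_le_mul_of_nonneg_left hΔV hγ]

end Perturbation

theorem robustness_of_learned_policy_general {n m : ℕ}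
    (f : EuclideanSpace ℝ (Fin n) → EuclideanSpace ℝ (Fin m) → EuclideanSpace ℝ (Fin n))
    (c : EuclideanSpace ℝ (Fin n) → EuclideanSpace ℝ (Fin m) → ℝ)
    (γ : ℝ) (hγ : γ ∈ Set.Ioo (0 : ℝ) 1)
    (r ζ : ℝ) (hζ : 0 ≤ ζ)
    (πhat : EuclideanSpace ℝ (Fin n) → EuclideanSpace ℝ (Fin m))
    (ℓπ : ℝ) (hℓπ : 0 ≤ ℓπ)
    (hπhat_lip : ∀ x y, ‖πhat x - πhat y‖ ≤ ℓπ * ‖x - y‖)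
    -- (i) invariance of the ball and well-definedness/boundedness of the value functions
    (hinv_hat : ∀ x ∈ closedBall (0 : EuclideanSpace ℝ (Fin n)) r,
      cloop f πhat x ∈ closedBall (0 : EuclideanSpace ℝ (Fin n)) r)
    (hinv_pert : ∀ δ : EuclideanSpace ℝ (Fin n), ‖δ‖ ≤ ζ →
      ∀ x ∈ closedBall (0 : EuclideanSpace ℝ (Fin n)) r,
        cloop f (fun z => πhat (z + δ)) x ∈ closedBall (0 : EuclideanSpace ℝ (Fin n)) r)
    (hsum_hat : ∀ x ∈ closedBall (0 : EuclideanSpace ℝ (Fin n)) r,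
      Summable fun t : ℕ => γ ^ t * c ((cloop f πhat)^[t] x) (πhat ((cloop f πhat)^[t] x)))
    (hsum_pert : ∀ δ : EuclideanSpace ℝ (Fin n), ‖δ‖ ≤ ζ →
      ∀ x ∈ closedBall (0 : EuclideanSpace ℝ (Fin n)) r,
        Summable fun t : ℕ => γ ^ t *
          c ((cloop f (fun z => πhat (z + δ)))^[t] x)
            (πhat ((cloop f (fun z => πhat (z + δ)))^[t] x + δ)))
    (hbdd_hat : ∃ M : ℝ, ∀ x ∈ closedBall (0 : EuclideanSpace ℝ (Fin n)) r,
      |Vval f c γ πhat x| ≤ M)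
    (hbdd_pert : ∃ M : ℝ, ∀ δ : EuclideanSpace ℝ (Fin n), ‖δ‖ ≤ ζ →
      ∀ x ∈ closedBall (0 : EuclideanSpace ℝ (Fin n)) r,
        |Vval f c γ (fun z => πhat (z + δ)) x| ≤ M)
    -- (ii) Lipschitz continuity of the stage cost and of the dynamics in the control
    (ℓcu ℓfu : ℝ) (hℓcu : 0 ≤ ℓcu) (hℓfu : 0 ≤ ℓfu)
    (hc_lip : ∀ x u₁ u₂, |c x u₁ - c x u₂| ≤ ℓcu * ‖u₁ - u₂‖)
    (hf_lip : ∀ x u₁ u₂, ‖f x u₁ - f x u₂‖ ≤ ℓfu * ‖u₁ - u₂‖)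
    -- (iii) Lipschitz continuity of `V^π̂` on the ball
    (ℓV : ℝ) (hℓV : 0 ≤ ℓV)
    (hV_lip : ∀ x ∈ closedBall (0 : EuclideanSpace ℝ (Fin n)) r,
      ∀ y ∈ closedBall (0 : EuclideanSpace ℝ (Fin n)) r,
        |Vval f c γ πhat x - Vval f c γ πhat y| ≤ ℓV * ‖x - y‖) :
    sSup {s : ℝ | ∃ x ∈ closedBall (0 : EuclideanSpace ℝ (Fin n)) r,
        ∃ δ : EuclideanSpace ℝ (Fin n), ‖δ‖ ≤ ζ ∧
          s = Vval f c γ (fun z => πhat (z + δ)) x - Vval f c γ πhat x}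
      ≤ (ℓcu + γ * ℓV * ℓfu) / (1 - γ) * ℓπ * ζ := by
  obtain ⟨hγ0, hγ1⟩ := hγ
  have h1γ : 0 < 1 - γ := by linarith
  refine Real.sSup_le ?_ (by positivity)
  rintro _ ⟨x, hx, δ, hδ, rfl⟩
  have hε : ∀ y, ‖πhat (y + δ) - πhat y‖ ≤ ℓπ * ζ := fun y =>
    (hπhat_lip _ _).trans <| by rw [add_sub_cancel_left]; exact mul_le_mul_of_nonneg_left hδ hℓπ
  obtain ⟨M, hM⟩ := hbdd_hat
  obtain ⟨M', hM'⟩ := hbdd_pert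
  have hbdd : BddAbove ((fun y => Vval f c γ (fun z => πhat (z + δ)) y - Vval f c γ πhat y) ''
      closedBall 0 r) := ⟨M' + M, by
    rintro _ ⟨y, hy, rfl⟩
    linarith [(abs_le.mp (hM' δ hδ y hy)).2, (abs_le.mp (hM y hy)).1]⟩
  have hD := MapsTo.le_div_one_sub_of_le_add_mul (hinv_pert δ hδ) hbdd hγ0.le hγ1
    (fun y hy => Vval_sub_Vval_le hγ0.le hy hinv_hat (hinv_pert δ hδ) (hsum_hat y hy)
      (hsum_pert δ hδ y hy) hℓcu hℓfu hℓV (hc_lip y) (hf_lip y) hV_lip (hε y)) hx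
  rwa [mul_assoc, div_mul_eq_mul_div]

theorem robustness_of_learned_policy {n m : ℕ}
    (f : EuclideanSpace ℝ (Fin n) → EuclideanSpace ℝ (Fin m) → EuclideanSpace ℝ (Fin n))
    (c : EuclideanSpace ℝ (Fin n) → EuclideanSpace ℝ (Fin m) → ℝ)
    (hc_nonneg : ∀ x u, 0 ≤ c x u)
    (γ : ℝ) (hγ : γ ∈ Set.Ioo (0 : ℝ) 1)
    (r ζ : ℝ) (hζ : 0 ≤ ζ)
    (πhat : EuclideanSpace ℝ (Fin n) → EuclideanSpace ℝ (Fin m))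
    (ℓπ : ℝ) (hℓπ : 0 ≤ ℓπ)
    (hπhat_lip : ∀ x y, ‖πhat x - πhat y‖ ≤ ℓπ * ‖x - y‖)
    -- (i) invariance of the ball and well-definedness/boundedness of the value functions
    (hinv_hat : ∀ x ∈ closedBall (0 : EuclideanSpace ℝ (Fin n)) r,
      cloop f πhat x ∈ closedBall (0 : EuclideanSpace ℝ (Fin n)) r)
    (hinv_pert : ∀ δ : EuclideanSpace ℝ (Fin n), ‖δ‖ ≤ ζ →
      ∀ x ∈ closedBall (0 : EuclideanSpace ℝ (Fin n)) r,
        cloop f (fun z => πhat (z + δ)) x ∈ closedBall (0 : EuclideanSpace ℝ (Fin n)) r)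
    (hsum_hat : ∀ x ∈ closedBall (0 : EuclideanSpace ℝ (Fin n)) r,
      Summable fun t : ℕ => γ ^ t * c ((cloop f πhat)^[t] x) (πhat ((cloop f πhat)^[t] x)))
    (hsum_pert : ∀ δ : EuclideanSpace ℝ (Fin n), ‖δ‖ ≤ ζ →
      ∀ x ∈ closedBall (0 : EuclideanSpace ℝ (Fin n)) r,
        Summable fun t : ℕ => γ ^ t *
          c ((cloop f (fun z => πhat (z + δ)))^[t] x)
            (πhat ((cloop f (fun z => πhat (z + δ)))^[t] x + δ)))
    (hbdd_hat : ∃ M : ℝ, ∀ x ∈ closedBall (0 : EuclideanSpace ℝ (Fin n)) r,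
      |Vval f c γ πhat x| ≤ M)
    (hbdd_pert : ∃ M : ℝ, ∀ δ : EuclideanSpace ℝ (Fin n), ‖δ‖ ≤ ζ →
      ∀ x ∈ closedBall (0 : EuclideanSpace ℝ (Fin n)) r,
        |Vval f c γ (fun z => πhat (z + δ)) x| ≤ M)
    -- (ii) Lipschitz continuity of the stage cost and of the dynamics in the control
    (ℓcu ℓfu : ℝ) (hℓcu : 0 ≤ ℓcu) (hℓfu : 0 ≤ ℓfu)
    (hc_lip : ∀ x u₁ u₂, |c x u₁ - c x u₂| ≤ ℓcu * ‖u₁ - u₂‖)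
    (hf_lip : ∀ x u₁ u₂, ‖f x u₁ - f x u₂‖ ≤ ℓfu * ‖u₁ - u₂‖)
    -- (iii) Lipschitz continuity of `V^π̂` on the ball
    (ℓV : ℝ) (hℓV : 0 ≤ ℓV)
    (hV_lip : ∀ x ∈ closedBall (0 : EuclideanSpace ℝ (Fin n)) r,
      ∀ y ∈ closedBall (0 : EuclideanSpace ℝ (Fin n)) r,
        |Vval f c γ πhat x - Vval f c γ πhat y| ≤ ℓV * ‖x - y‖) :
    sSup {s : ℝ | ∃ x ∈ closedBall (0 : EuclideanSpace ℝ (Fin n)) r,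
        ∃ δ : EuclideanSpace ℝ (Fin n), ‖δ‖ ≤ ζ ∧
          s = Vval f c γ (fun z => πhat (z + δ)) x - Vval f c γ πhat x}
      ≤ (ℓcu + γ * ℓV * ℓfu) / (1 - γ) * ℓπ * ζ :=
  robustness_of_learned_policy_general f c γ hγ r ζ hζ πhat ℓπ hℓπ hπhat_lip hinv_hat hinv_pert
    hsum_hat hsum_pert hbdd_hat hbdd_pert ℓcu ℓfu hℓcu hℓfu hc_lip hf_lip ℓV hℓV hV_lip
end

section
/- Let c : ℝⁿ × ℝᵐ → ℝ be differentiable with a λ-Lipschitz gradient, nonnegative, and satisfy c(0,0) = 0. Let π be a feedback policy with ‖π(x)‖ ≤ κ̄ ‖x‖ for all x. Then c_π(x) ≤ (λ/2)(1 + κ̄²)‖x‖² for all x; moreover, if in addition the closed-loop trajectory satisfies Σ_{t=0}^∞ ‖f_π^t(x)‖² ≤ θ ‖x‖² for all x, then for every γ ∈ (0,1) the value function satisfies V^π(x) ≤ (λ/2)(1 + κ̄²) θ ‖x‖². -/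
/-- The stage cost viewed as a function on the joint state-control space, equipped with
the Euclidean (`L²`) product norm, so that `‖(x,u)‖² = ‖x‖² + ‖u‖²`. -/
def jointCost {n m : ℕ}
    (c : EuclideanSpace ℝ (Fin n) → EuclideanSpace ℝ (Fin m) → ℝ) :
    WithLp 2 (EuclideanSpace ℝ (Fin n) × EuclideanSpace ℝ (Fin m)) → ℝ :=
  fun p => c (WithLp.equiv 2 _ p).1 (WithLp.equiv 2 _ p).2

/-!
The origin minimises the nonnegative joint cost, so the gradient vanishes there and the
descent lemma for a `λ`-Lipschitz gradient gives `c(x,u) ≤ (λ/2)(‖x‖² + ‖u‖²)`; with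
`‖π x‖ ≤ κ̄‖x‖` this is the bound on `c_π`. As `γᵗ ≤ 1`, the discounted series is then dominated
termwise by `(λ/2)(1 + κ̄²) ‖f_πᵗ(x)‖²`.
-/

section Descent

variable {E : Type*} [NormedAddCommGroup E] [NormedSpace ℝ E] {g : E → ℝ} {L : ℝ} {x : E}

theorem image_add_le_of_norm_fderiv_sub_le (hg : Differentiable ℝ g)
    (hlip : ∀ y, ‖fderiv ℝ g y - fderiv ℝ g x‖ ≤ L * ‖y - x‖) (v : E) :
    g (x + v) ≤ g x + fderiv ℝ g x v + L / 2 * ‖v‖ ^ 2 := by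
  set h : ℝ → ℝ := fun t => g (x + t • v) - t * fderiv ℝ g x v - L / 2 * t ^ 2 * ‖v‖ ^ 2
  have hderiv : ∀ t, HasDerivAt h
      (fderiv ℝ g (x + t • v) v - fderiv ℝ g x v - L * t * ‖v‖ ^ 2) t := by
    intro t
    have hray : HasDerivAt (fun s : ℝ => x + s • v) v t := by
      simpa using ((hasDerivAt_id t).smul_const v).const_add x
    have := (((hg _).hasFDerivAt.comp_hasDerivAt t hray).sub
      ((hasDerivAt_id t).mul_const (fderiv ℝ g x v))).sub
      (((hasDerivAt_pow 2 t).const_mul (L / 2)).mul_const (‖v‖ ^ 2))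
    exact this.congr_deriv (by simp only [one_mul, Nat.cast_ofNat, Nat.reduceSub, pow_one]; ring)
  have hslope : ∀ t ∈ interior (Set.Ici (0 : ℝ)),
      fderiv ℝ g (x + t • v) v - fderiv ℝ g x v - L * t * ‖v‖ ^ 2 ≤ 0 := by
    intro t ht
    rw [interior_Ici, Set.mem_Ioi] at ht
    calc fderiv ℝ g (x + t • v) v - fderiv ℝ g x v - L * t * ‖v‖ ^ 2
        = (fderiv ℝ g (x + t • v) - fderiv ℝ g x) v - L * t * ‖v‖ ^ 2 := rfl
      _ ≤ ‖fderiv ℝ g (x + t • v) - fderiv ℝ g x‖ * ‖v‖ - L * t * ‖v‖ ^ 2 := by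
          gcongr
          exact (Real.le_norm_self _).trans (ContinuousLinearMap.le_opNorm _ _)
      _ ≤ L * ‖t • v‖ * ‖v‖ - L * t * ‖v‖ ^ 2 := by
          gcongr
          simpa using hlip (x + t • v)
      _ = 0 := by rw [norm_smul, Real.norm_of_nonneg ht.le]; ring
  have hanti : AntitoneOn h (Set.Ici 0) :=
    antitoneOn_of_hasDerivWithinAt_nonpos (convex_Ici 0)
      (fun t _ => (hderiv t).continuousAt.continuousWithinAt)
      (fun t _ => (hderiv t).hasDerivWithinAt) hslope
  have h01 := hanti Set.self_mem_Ici (Set.mem_Ici.2 zero_le_one) zero_le_one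
  norm_num [h] at h01
  linarith

theorem IsLocalMin.image_add_le_of_norm_fderiv_sub_le (hmin : IsLocalMin g x)
    (hg : Differentiable ℝ g) (hlip : ∀ y, ‖fderiv ℝ g y - fderiv ℝ g x‖ ≤ L * ‖y - x‖)
    (v : E) : g (x + v) ≤ g x + L / 2 * ‖v‖ ^ 2 := by
  simpa [hmin.fderiv_eq_zero] using _root_.image_add_le_of_norm_fderiv_sub_le hg hlip v

end Descent

theorem cost_le_half_mul_sq_norm_add_sq_norm {n m : ℕ}
    {c : EuclideanSpace ℝ (Fin n) → EuclideanSpace ℝ (Fin m) → ℝ} {lam : ℝ}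
    (hdiff : Differentiable ℝ (jointCost c))
    (hgrad_lip : ∀ p, ‖fderiv ℝ (jointCost c) p - fderiv ℝ (jointCost c) 0‖ ≤ lam * ‖p‖)
    (hc_nonneg : ∀ x u, 0 ≤ c x u) (hc00 : c 0 0 = 0) (x : EuclideanSpace ℝ (Fin n))
    (u : EuclideanSpace ℝ (Fin m)) :
    c x u ≤ lam / 2 * (‖x‖ ^ 2 + ‖u‖ ^ 2) := by
  have hmin : IsLocalMin (jointCost c) 0 :=
    Filter.Eventually.of_forall fun p => hc00.trans_le (hc_nonneg _ _)
  have := hmin.image_add_le_of_norm_fderiv_sub_le hdiff (by simpa using hgrad_lip)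
    (WithLp.toLp 2 (x, u))
  rw [zero_add, WithLp.prod_norm_sq_eq_of_L2, show jointCost c 0 = 0 from hc00, zero_add] at this
  exact this

theorem Vval_le_mul_tsum_sq_norm {E U : Type*} [Norm E] {f : E → U → E} {c : E → U → ℝ}
    {π : E → U} {γ K : ℝ} (hγ : γ ∈ Set.Icc (0 : ℝ) 1) (hc_nonneg : ∀ x, 0 ≤ c x (π x))
    (hcK : ∀ x, c x (π x) ≤ K * ‖x‖ ^ 2) {x : E}
    (hsum : Summable fun t : ℕ => ‖(cloop f π)^[t] x‖ ^ 2) :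
    Vval f c γ π x ≤ K * ∑' t : ℕ, ‖(cloop f π)^[t] x‖ ^ 2 := by
  have hterm : ∀ t : ℕ, γ ^ t * c ((cloop f π)^[t] x) (π ((cloop f π)^[t] x)) ≤
      K * ‖(cloop f π)^[t] x‖ ^ 2 := fun t =>
    (mul_le_of_le_one_left (hc_nonneg _) (pow_le_one₀ hγ.1 hγ.2)).trans (hcK _)
  rw [← tsum_mul_left]
  exact Summable.tsum_le_tsum hterm
    ((hsum.mul_left K).of_nonneg_of_le (fun t => mul_nonneg (pow_nonneg hγ.1 t) (hc_nonneg _))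
      hterm) (hsum.mul_left K)

theorem smooth_cost_upper_bound_general {n m : ℕ}
    (c : EuclideanSpace ℝ (Fin n) → EuclideanSpace ℝ (Fin m) → ℝ)
    (lam : ℝ) (hlam : 0 < lam)
    (hdiff : Differentiable ℝ (jointCost c))
    (hgrad_lip : ∀ p q, ‖fderiv ℝ (jointCost c) p - fderiv ℝ (jointCost c) q‖ ≤ lam * ‖p - q‖)
    (hc_nonneg : ∀ x u, 0 ≤ c x u)
    (hc00 : c 0 0 = 0)
    (π : EuclideanSpace ℝ (Fin n) → EuclideanSpace ℝ (Fin m))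
    (κ : ℝ)
    (hπ : ∀ x, ‖π x‖ ≤ κ * ‖x‖) :
    (∀ x, c x (π x) ≤ lam / 2 * (1 + κ ^ 2) * ‖x‖ ^ 2) ∧
    (∀ (f : EuclideanSpace ℝ (Fin n) → EuclideanSpace ℝ (Fin m) → EuclideanSpace ℝ (Fin n))
      (θ : ℝ),
      (∀ x, Summable fun t : ℕ => ‖(cloop f π)^[t] x‖ ^ 2) →
      (∀ x, (∑' t : ℕ, ‖(cloop f π)^[t] x‖ ^ 2) ≤ θ * ‖x‖ ^ 2) →
      ∀ γ ∈ Set.Ioo (0 : ℝ) 1, ∀ x,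
        Vval f c γ π x ≤ lam / 2 * (1 + κ ^ 2) * θ * ‖x‖ ^ 2) := by
  have hpolicy : ∀ x, c x (π x) ≤ lam / 2 * (1 + κ ^ 2) * ‖x‖ ^ 2 := by
    intro x
    have hπsq : ‖π x‖ ^ 2 ≤ κ ^ 2 * ‖x‖ ^ 2 := by
      simpa only [mul_pow] using pow_le_pow_left₀ (norm_nonneg _) (hπ x) 2
    calc c x (π x) ≤ lam / 2 * (‖x‖ ^ 2 + ‖π x‖ ^ 2) :=
          cost_le_half_mul_sq_norm_add_sq_norm hdiff (fun p => by simpa using hgrad_lip p 0)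
            hc_nonneg hc00 x (π x)
      _ ≤ lam / 2 * (1 + κ ^ 2) * ‖x‖ ^ 2 := by
          rw [mul_assoc]
          gcongr
          linarith
  refine ⟨hpolicy, fun f θ hsum hθ γ hγ x => ?_⟩
  calc Vval f c γ π x ≤ lam / 2 * (1 + κ ^ 2) * ∑' t : ℕ, ‖(cloop f π)^[t] x‖ ^ 2 :=
        Vval_le_mul_tsum_sq_norm (Set.Ioo_subset_Icc_self hγ) (fun _ => hc_nonneg _ _) hpolicy
          (hsum x)
    _ ≤ lam / 2 * (1 + κ ^ 2) * (θ * ‖x‖ ^ 2) := by gcongr; exact hθ x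
    _ = lam / 2 * (1 + κ ^ 2) * θ * ‖x‖ ^ 2 := by ring

theorem smooth_cost_upper_bound {n m : ℕ}
    (c : EuclideanSpace ℝ (Fin n) → EuclideanSpace ℝ (Fin m) → ℝ)
    (lam : ℝ) (hlam : 0 < lam)
    (hdiff : Differentiable ℝ (jointCost c))
    (hgrad_lip : ∀ p q, ‖fderiv ℝ (jointCost c) p - fderiv ℝ (jointCost c) q‖ ≤ lam * ‖p - q‖)
    (hc_nonneg : ∀ x u, 0 ≤ c x u)
    (hc00 : c 0 0 = 0)
    (π : EuclideanSpace ℝ (Fin n) → EuclideanSpace ℝ (Fin m))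
    (κ : ℝ) (hκ : 0 ≤ κ)
    (hπ : ∀ x, ‖π x‖ ≤ κ * ‖x‖) :
    (∀ x, c x (π x) ≤ lam / 2 * (1 + κ ^ 2) * ‖x‖ ^ 2) ∧
    (∀ (f : EuclideanSpace ℝ (Fin n) → EuclideanSpace ℝ (Fin m) → EuclideanSpace ℝ (Fin n))
      (θ : ℝ),
      (∀ x, Summable fun t : ℕ => ‖(cloop f π)^[t] x‖ ^ 2) →
      (∀ x, (∑' t : ℕ, ‖(cloop f π)^[t] x‖ ^ 2) ≤ θ * ‖x‖ ^ 2) →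
      ∀ γ ∈ Set.Ioo (0 : ℝ) 1, ∀ x,
        Vval f c γ π x ≤ lam / 2 * (1 + κ ^ 2) * θ * ‖x‖ ^ 2) :=
  smooth_cost_upper_bound_general c lam hlam hdiff hgrad_lip hc_nonneg hc00 π κ hπ
end

section
/- Let V : ℝⁿ → ℝ≥0, let π be a feedback policy, and suppose the Bellman recursion V(x) = c_π(x) + γ V(f_π(x)) holds for all x, where γ ∈ (0,1). Assume c_π(x) ≥ (μ/2)‖x‖² and V(x) ≤ B‖x‖² for all x, with constants μ > 0 and B ≥ μ/2, and set γ₀ = 1 − μ/(2B). If γ ∈ (γ₀, 1), then V(f_π(x)) ≤ (γ₀/γ) V(x) for every x ∈ ℝⁿ; in particular the value function strictly decreases by a constant factor along closed-loop trajectories. -/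
/-!
The quadratic bounds give `c_π ≥ (μ / 2) ‖x‖² ≥ (μ / (2B)) V = (1 - γ₀) V`, so the cost paid at
each step is at least a fixed fraction of the value, and the Bellman identity leaves
`γ V(f_π x) = V x - c_π x ≤ γ₀ V x`.
-/

lemma one_sub_div_two_mul_nonneg {μ B : ℝ} (hμ : 0 ≤ μ) (hB : μ / 2 ≤ B) :
    0 ≤ 1 - μ / (2 * B) := by
  rcases hμ.eq_or_lt with rfl | hμ
  · simp
  rw [sub_nonneg, div_le_one (by linarith)]
  linarith

lemma div_two_mul_mul_le_of_le_mul {μ B v q : ℝ} (hμ : 0 ≤ μ) (hB : 0 < B) (hv : v ≤ B * q) :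
    μ / (2 * B) * v ≤ μ / 2 * q :=
  calc μ / (2 * B) * v ≤ μ / (2 * B) * (B * q) := by gcongr
    _ = μ / 2 * q := by field_simp

theorem le_div_mul_of_bellman {X : Type*} {V ℓ : X → ℝ} {g : X → X} {γ γ₀ : ℝ} (hγ : 0 < γ)
    (hbellman : ∀ x, V x = ℓ x + γ * V (g x)) (hℓ : ∀ x, (1 - γ₀) * V x ≤ ℓ x) (x : X) :
    V (g x) ≤ γ₀ / γ * V x := by
  rw [div_mul_eq_mul_div, le_div_iff₀ hγ]
  linarith [hbellman x, hℓ x]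

theorem value_decrease_along_trajectory_general {n m : ℕ}
    (f : EuclideanSpace ℝ (Fin n) → EuclideanSpace ℝ (Fin m) → EuclideanSpace ℝ (Fin n))
    (π : EuclideanSpace ℝ (Fin n) → EuclideanSpace ℝ (Fin m))
    (c : EuclideanSpace ℝ (Fin n) → EuclideanSpace ℝ (Fin m) → ℝ)
    (V : EuclideanSpace ℝ (Fin n) → ℝ)
    (γ μ B γ₀ : ℝ) (hμ : 0 < μ) (hB : μ / 2 ≤ B)
    (hγ₀ : γ₀ = 1 - μ / (2 * B))
    (hγ : γ ∈ Set.Ioo γ₀ 1)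
    (hbellman : ∀ x, V x = c x (π x) + γ * V (f x (π x)))
    (hc_lb : ∀ x, μ / 2 * ‖x‖ ^ 2 ≤ c x (π x))
    (hV_ub : ∀ x, V x ≤ B * ‖x‖ ^ 2) :
    ∀ x, V (f x (π x)) ≤ γ₀ / γ * V x := by
  have hB_pos : 0 < B := by linarith
  have hγ_pos : 0 < γ := (hγ₀ ▸ one_sub_div_two_mul_nonneg hμ.le hB).trans_lt hγ.1
  refine le_div_mul_of_bellman (ℓ := fun x => c x (π x)) (g := fun x => f x (π x))
    hγ_pos hbellman fun x => ?_
  calc (1 - γ₀) * V x = μ / (2 * B) * V x := by rw [hγ₀, sub_sub_cancel]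
    _ ≤ μ / 2 * ‖x‖ ^ 2 := div_two_mul_mul_le_of_le_mul hμ.le hB_pos (hV_ub x)
    _ ≤ c x (π x) := hc_lb x

theorem value_decrease_along_trajectory {n m : ℕ}
    (f : EuclideanSpace ℝ (Fin n) → EuclideanSpace ℝ (Fin m) → EuclideanSpace ℝ (Fin n))
    (π : EuclideanSpace ℝ (Fin n) → EuclideanSpace ℝ (Fin m))
    (c : EuclideanSpace ℝ (Fin n) → EuclideanSpace ℝ (Fin m) → ℝ)
    (V : EuclideanSpace ℝ (Fin n) → ℝ)
    (hV_nonneg : ∀ x, 0 ≤ V x)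
    (γ μ B γ₀ : ℝ) (hμ : 0 < μ) (hB : μ / 2 ≤ B)
    (hγ₀ : γ₀ = 1 - μ / (2 * B))
    (hγ : γ ∈ Set.Ioo γ₀ 1)
    (hbellman : ∀ x, V x = c x (π x) + γ * V (f x (π x)))
    (hc_lb : ∀ x, μ / 2 * ‖x‖ ^ 2 ≤ c x (π x))
    (hV_ub : ∀ x, V x ≤ B * ‖x‖ ^ 2) :
    ∀ x, V (f x (π x)) ≤ γ₀ / γ * V x :=
  value_decrease_along_trajectory_general f π c V γ μ B γ₀ hμ hB hγ₀ hγ hbellman hc_lb hV_ub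
end

section
/- Let f be Lipschitz in the control with constant ℓ_f^u (‖f(x,u₁) − f(x,u₂)‖ ≤ ℓ_f^u‖u₁ − u₂‖). Let π* and π̂ be feedback policies such that the closed-loop map f_{π*} is Lipschitz on B_r(0) with constant ℓ < 1 and maps B_r(0) into itself. Fix x ∈ B_r(0), t ∈ ℕ, and suppose the learned-policy iterates x̂_τ = f_{π̂}^τ(x) lie in B_r(0) for all 0 ≤ τ < t. Then ‖f_{π̂}^t(x) − f_{π*}^t(x)‖ ≤ ℓ_f^u ((1 − ℓ^t)/(1 − ℓ)) · max_{0 ≤ τ < t} ‖π̂(x̂_τ) − π*(x̂_τ)‖. -/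
/-!
Both closed loops are run from the same state. At each step the learned trajectory `x̂` leaves the
optimal closed loop by the one-step error `f_{π̂}(x̂_τ) - f_{π*}(x̂_τ)`, of norm at most
`ℓ_f^u ‖π̂(x̂_τ) - π*(x̂_τ)‖`, while the optimal closed loop contracts the deviation accumulated so
far by the factor `ℓ`. The deviation after `t` steps is therefore at most the geometric sum
`(1 + ℓ + ⋯ + ℓ^(t-1))` times the largest one-step error.
-/

open Metric Finset

theorem norm_iterate_sub_iterate_le_geom_sum_mul {E : Type*} [SeminormedAddCommGroup E]
    {F G : E → E} {s : Set E} {ℓ δ : ℝ} (hℓ : 0 ≤ ℓ)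
    (hG_lip : ∀ y ∈ s, ∀ z ∈ s, ‖G y - G z‖ ≤ ℓ * ‖y - z‖) (hG_maps : Set.MapsTo G s s)
    {x : E} (hx : x ∈ s) {k : ℕ} (hF_mem : ∀ τ < k, F^[τ] x ∈ s)
    (hδ : ∀ τ < k, ‖F (F^[τ] x) - G (F^[τ] x)‖ ≤ δ) :
    ‖F^[k] x - G^[k] x‖ ≤ (∑ i ∈ range k, ℓ ^ i) * δ := by
  induction k with
  | zero => simp
  | succ k ih =>
    have ih := ih (fun τ hτ => hF_mem τ (by omega)) (fun τ hτ => hδ τ (by omega))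
    set y := F^[k] x
    set z := G^[k] x
    rw [Function.iterate_succ_apply', Function.iterate_succ_apply', geom_sum_succ]
    calc ‖F y - G z‖ ≤ ‖F y - G y‖ + ‖G y - G z‖ := norm_sub_le_norm_sub_add_norm_sub _ _ _
      _ ≤ δ + ℓ * ((∑ i ∈ range k, ℓ ^ i) * δ) := by
        gcongr
        · exact hδ k k.lt_succ_self
        · exact (hG_lip y (hF_mem k k.lt_succ_self) z (hG_maps.iterate k hx)).trans
            (mul_le_mul_of_nonneg_left ih hℓ)
      _ = (ℓ * ∑ i ∈ range k, ℓ ^ i + 1) * δ := by ring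

theorem apply_le_sSup_of_lt {α : Type*} [ConditionallyCompleteLinearOrder α] (g : ℕ → α)
    {t τ : ℕ} (hτ : τ < t) : g τ ≤ sSup {s : α | ∃ τ < t, s = g τ} := by
  have hfin : {s : α | ∃ τ < t, s = g τ}.Finite :=
    ((Set.finite_Iio t).image g).subset fun _ ⟨τ, hτ, hs⟩ => ⟨τ, hτ, hs.symm⟩
  exact le_csSup hfin.bddAbove ⟨τ, hτ, rfl⟩

theorem geom_sum_eq_one_sub_div {K : Type*} [Field K] {ℓ : K} (hℓ : ℓ ≠ 1) (t : ℕ) :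
    ∑ i ∈ range t, ℓ ^ i = (1 - ℓ ^ t) / (1 - ℓ) := by
  rw [geom_sum_eq hℓ, ← neg_div_neg_eq, neg_sub, neg_sub]

theorem trajectory_deviation_bound {n m : ℕ}
    (f : EuclideanSpace ℝ (Fin n) → EuclideanSpace ℝ (Fin m) → EuclideanSpace ℝ (Fin n))
    (ℓfu : ℝ) (hℓfu : 0 ≤ ℓfu)
    (hf_lip : ∀ x u₁ u₂, ‖f x u₁ - f x u₂‖ ≤ ℓfu * ‖u₁ - u₂‖)
    (r : ℝ)
    (πstar πhat : EuclideanSpace ℝ (Fin n) → EuclideanSpace ℝ (Fin m))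
    (ℓ : ℝ) (hℓ0 : 0 ≤ ℓ) (hℓ1 : ℓ < 1)
    (hstar_lip : ∀ x ∈ closedBall (0 : EuclideanSpace ℝ (Fin n)) r,
      ∀ y ∈ closedBall (0 : EuclideanSpace ℝ (Fin n)) r,
        ‖cloop f πstar x - cloop f πstar y‖ ≤ ℓ * ‖x - y‖)
    (hstar_inv : ∀ x ∈ closedBall (0 : EuclideanSpace ℝ (Fin n)) r,
      cloop f πstar x ∈ closedBall (0 : EuclideanSpace ℝ (Fin n)) r)
    (x : EuclideanSpace ℝ (Fin n))
    (hx : x ∈ closedBall (0 : EuclideanSpace ℝ (Fin n)) r)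
    (t : ℕ)
    (hiter : ∀ τ < t, (cloop f πhat)^[τ] x ∈ closedBall (0 : EuclideanSpace ℝ (Fin n)) r) :
    ‖(cloop f πhat)^[t] x - (cloop f πstar)^[t] x‖
      ≤ ℓfu * ((1 - ℓ ^ t) / (1 - ℓ)) *
        sSup {s : ℝ | ∃ τ < t,
          s = ‖πhat ((cloop f πhat)^[τ] x) - πstar ((cloop f πhat)^[τ] x)‖} := by
  have hone_step : ∀ τ < t,
      ‖cloop f πhat ((cloop f πhat)^[τ] x) - cloop f πstar ((cloop f πhat)^[τ] x)‖
        ≤ ℓfu * sSup {s : ℝ | ∃ τ < t,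
          s = ‖πhat ((cloop f πhat)^[τ] x) - πstar ((cloop f πhat)^[τ] x)‖} := fun τ hτ =>
    (hf_lip _ _ _).trans <| mul_le_mul_of_nonneg_left
      (apply_le_sSup_of_lt
        (fun τ => ‖πhat ((cloop f πhat)^[τ] x) - πstar ((cloop f πhat)^[τ] x)‖) hτ)
      hℓfu
  have hdev := norm_iterate_sub_iterate_le_geom_sum_mul hℓ0 hstar_lip hstar_inv hx hiter hone_step
  rw [geom_sum_eq_one_sub_div hℓ1.ne] at hdev
  linarith
end

section
/- Let f be Lipschitz in the control with constant ℓ_f^u. Let π* be a policy whose closed-loop map f_{π*} is Lipschitz on B_r(0) with constant ℓ < 1, maps B_r(0) into itself, and satisfies f_{π*}(0) = 0. Let π̂ be a policy with sup_{z ∈ B_r(0)} ‖π̂(z) − π*(z)‖ ≤ η, and let r' = r − ℓ_f^u η/(1 − ℓ) with r' > 0. Then for every x ∈ B_{r'}(0), the learned-policy iterates satisfy f_{π̂}^t(x) ∈ B_r(0) for all t ∈ ℕ, and moreover ‖f_{π̂}^t(x)‖ ≤ ℓ^t ‖x‖ + ℓ_f^u ((1 − ℓ^t)/(1 − ℓ))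 η for all t. -/
/-!
Each step of the learned closed loop is within `ℓ_f^u η` of the expert's, and the expert's
closed loop contracts towards its fixed point `0` by the factor `ℓ`, so on `B_r(0)` the
learned loop satisfies `‖f_π̂(y)‖ ≤ ℓ ‖y‖ + ℓ_f^u η`. Iterating this affine bound gives the
decay estimate, whose right-hand side never exceeds `‖x‖ + ℓ_f^u η / (1 - ℓ) ≤ r`; this keeps
the iterates in `B_r(0)`, where the one-step bound applies again.
-/

open Metric

section Perturbation

variable {E U : Type*} [SeminormedAddCommGroup E] [SeminormedAddCommGroup U]

theorem norm_cloop_le_of_policy_near {f : E → U → E} {π π' : E → U} {ℓfu ℓ η : ℝ} {y : E}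
    (hf_lip : ∀ x u₁ u₂, ‖f x u₁ - f x u₂‖ ≤ ℓfu * ‖u₁ - u₂‖) (hℓfu : 0 ≤ ℓfu)
    (hclose : ‖π' y - π y‖ ≤ η) (hcontract : ‖cloop f π y‖ ≤ ℓ * ‖y‖) :
    ‖cloop f π' y‖ ≤ ℓ * ‖y‖ + ℓfu * η :=
  calc ‖cloop f π' y‖ ≤ ‖cloop f π' y - cloop f π y‖ + ‖cloop f π y‖ := norm_le_norm_sub_add _ _
    _ ≤ ℓfu * η + ℓ * ‖y‖ :=
        add_le_add ((hf_lip y _ _).trans (mul_le_mul_of_nonneg_left hclose hℓfu)) hcontract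
    _ = ℓ * ‖y‖ + ℓfu * η := add_comm _ _

end Perturbation

section AffineBound

variable {E : Type*} [SeminormedAddCommGroup E]

theorem affine_geom_bound_le {ℓ c a r : ℝ} (hℓ0 : 0 ≤ ℓ) (hℓ1 : ℓ < 1) (hc : 0 ≤ c)
    (ha : 0 ≤ a) (har : a ≤ r - c / (1 - ℓ)) (t : ℕ) :
    ℓ ^ t * a + c * ((1 - ℓ ^ t) / (1 - ℓ)) ≤ r := by
  have hpow : ℓ ^ t ≤ 1 := pow_le_one₀ hℓ0 hℓ1.le
  have hfirst : ℓ ^ t * a ≤ a := mul_le_of_le_one_left ha hpow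
  have hsecond : c * ((1 - ℓ ^ t) / (1 - ℓ)) ≤ c / (1 - ℓ) := by
    rw [← mul_div_assoc]
    exact div_le_div_of_nonneg_right (by nlinarith [pow_nonneg hℓ0 t]) (by linarith)
  linarith

theorem norm_iterate_le_of_norm_le_mul_add {h : E → E} {ℓ c r : ℝ} (hℓ0 : 0 ≤ ℓ)
    (hℓ1 : ℓ < 1) (hc : 0 ≤ c) (hstep : ∀ y ∈ closedBall (0 : E) r, ‖h y‖ ≤ ℓ * ‖y‖ + c)
    {x : E} (hx : ‖x‖ ≤ r - c / (1 - ℓ)) (t : ℕ) :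
    ‖h^[t] x‖ ≤ ℓ ^ t * ‖x‖ + c * ((1 - ℓ ^ t) / (1 - ℓ)) := by
  induction t with
  | zero => simp
  | succ t ih =>
    have hmem : h^[t] x ∈ closedBall (0 : E) r :=
      mem_closedBall_zero_iff.mpr (ih.trans (affine_geom_bound_le hℓ0 hℓ1 hc (norm_nonneg x) hx t))
    have hrec : ℓ * (ℓ ^ t * ‖x‖ + c * ((1 - ℓ ^ t) / (1 - ℓ))) + c
        = ℓ ^ (t + 1) * ‖x‖ + c * ((1 - ℓ ^ (t + 1)) / (1 - ℓ)) := by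
      field_simp [sub_ne_zero.mpr hℓ1.ne']
      ring
    rw [Function.iterate_succ_apply', ← hrec]
    calc ‖h (h^[t] x)‖ ≤ ℓ * ‖h^[t] x‖ + c := hstep _ hmem
      _ ≤ ℓ * (ℓ ^ t * ‖x‖ + c * ((1 - ℓ ^ t) / (1 - ℓ))) + c := by gcongr

end AffineBound

theorem learned_policy_invariance_and_decay_general {n m : ℕ}
    (f : EuclideanSpace ℝ (Fin n) → EuclideanSpace ℝ (Fin m) → EuclideanSpace ℝ (Fin n))
    (ℓfu : ℝ) (hℓfu : 0 ≤ ℓfu)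
    (hf_lip : ∀ x u₁ u₂, ‖f x u₁ - f x u₂‖ ≤ ℓfu * ‖u₁ - u₂‖)
    (r : ℝ)
    (πstar πhat : EuclideanSpace ℝ (Fin n) → EuclideanSpace ℝ (Fin m))
    (ℓ : ℝ) (hℓ0 : 0 ≤ ℓ) (hℓ1 : ℓ < 1)
    (hstar_lip : ∀ x ∈ closedBall (0 : EuclideanSpace ℝ (Fin n)) r,
      ∀ y ∈ closedBall (0 : EuclideanSpace ℝ (Fin n)) r,
        ‖cloop f πstar x - cloop f πstar y‖ ≤ ℓ * ‖x - y‖)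
    (hstar0 : cloop f πstar 0 = 0)
    (η : ℝ) (hη0 : 0 ≤ η)
    (hclose : ∀ z ∈ closedBall (0 : EuclideanSpace ℝ (Fin n)) r, ‖πhat z - πstar z‖ ≤ η)
    (r' : ℝ) (hr' : r' = r - ℓfu * η / (1 - ℓ)) :
    ∀ x ∈ closedBall (0 : EuclideanSpace ℝ (Fin n)) r', ∀ t : ℕ,
      (cloop f πhat)^[t] x ∈ closedBall (0 : EuclideanSpace ℝ (Fin n)) r ∧
      ‖(cloop f πhat)^[t] x‖ ≤ ℓ ^ t * ‖x‖ + ℓfu * ((1 - ℓ ^ t) / (1 - ℓ)) * η := by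
  intro x hx t
  have hc : 0 ≤ ℓfu * η := mul_nonneg hℓfu hη0
  have hstep : ∀ y ∈ closedBall (0 : EuclideanSpace ℝ (Fin n)) r,
      ‖cloop f πhat y‖ ≤ ℓ * ‖y‖ + ℓfu * η := fun y hy =>
    have h0 := mem_closedBall_self (nonempty_closedBall.mp ⟨y, hy⟩)
    norm_cloop_le_of_policy_near hf_lip hℓfu (hclose y hy)
      (by simpa [hstar0] using hstar_lip y hy 0 h0)
  have hx' : ‖x‖ ≤ r - ℓfu * η / (1 - ℓ) := hr' ▸ mem_closedBall_zero_iff.mp hx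
  have hdecay := norm_iterate_le_of_norm_le_mul_add hℓ0 hℓ1 hc hstep hx' t
  refine ⟨mem_closedBall_zero_iff.mpr
    (hdecay.trans (affine_geom_bound_le hℓ0 hℓ1 hc (norm_nonneg x) hx' t)), ?_⟩
  calc ‖(cloop f πhat)^[t] x‖ ≤ ℓ ^ t * ‖x‖ + ℓfu * η * ((1 - ℓ ^ t) / (1 - ℓ)) := hdecay
    _ = ℓ ^ t * ‖x‖ + ℓfu * ((1 - ℓ ^ t) / (1 - ℓ)) * η := by ring

theorem learned_policy_invariance_and_decay {n m : ℕ}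
    (f : EuclideanSpace ℝ (Fin n) → EuclideanSpace ℝ (Fin m) → EuclideanSpace ℝ (Fin n))
    (ℓfu : ℝ) (hℓfu : 0 ≤ ℓfu)
    (hf_lip : ∀ x u₁ u₂, ‖f x u₁ - f x u₂‖ ≤ ℓfu * ‖u₁ - u₂‖)
    (r : ℝ)
    (πstar πhat : EuclideanSpace ℝ (Fin n) → EuclideanSpace ℝ (Fin m))
    (ℓ : ℝ) (hℓ0 : 0 ≤ ℓ) (hℓ1 : ℓ < 1)
    (hstar_lip : ∀ x ∈ closedBall (0 : EuclideanSpace ℝ (Fin n)) r,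
      ∀ y ∈ closedBall (0 : EuclideanSpace ℝ (Fin n)) r,
        ‖cloop f πstar x - cloop f πstar y‖ ≤ ℓ * ‖x - y‖)
    (hstar_inv : ∀ x ∈ closedBall (0 : EuclideanSpace ℝ (Fin n)) r,
      cloop f πstar x ∈ closedBall (0 : EuclideanSpace ℝ (Fin n)) r)
    (hstar0 : cloop f πstar 0 = 0)
    (η : ℝ) (hη0 : 0 ≤ η)
    (hclose : ∀ z ∈ closedBall (0 : EuclideanSpace ℝ (Fin n)) r, ‖πhat z - πstar z‖ ≤ η)
    (r' : ℝ) (hr' : r' = r - ℓfu * η / (1 - ℓ)) (hr'pos : 0 < r') :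
    ∀ x ∈ closedBall (0 : EuclideanSpace ℝ (Fin n)) r', ∀ t : ℕ,
      (cloop f πhat)^[t] x ∈ closedBall (0 : EuclideanSpace ℝ (Fin n)) r ∧
      ‖(cloop f πhat)^[t] x‖ ≤ ℓ ^ t * ‖x‖ + ℓfu * ((1 - ℓ ^ t) / (1 - ℓ)) * η :=
  learned_policy_invariance_and_decay_general f ℓfu hℓfu hf_lip r πstar πhat ℓ hℓ0 hℓ1 hstar_lip
    hstar0 η hη0 hclose r' hr'
end

section
/- Let f be Lipschitz in the control with constant ℓ_f^u. Let π* be a policy whose closed-loop map f_{π*} is Lipschitz on B_r(0) with constant ℓ < 1, maps B_r(0) into itself, and satisfies f_{π*}(0) = 0. Let π̂ : ℝⁿ → ℝᵐ be Lipschitz with constant α and satisfy sup_{z ∈ B_r(0)} ‖π̂(z) − π*(z)‖ ≤ ε. Let (δ_t)_{t∈ℕ} be any perturbation sequence with ‖δ_t‖ ≤ ζ for all t, and define the perturbed closed-loop trajectory by x̃_0 = x and x̃_{t+1} = f(x̃_t, π̂(x̃_t + δ_t)). Set r' = r − ℓ_f^u (α ζ + ε)/(1 − ℓ) and assume r' >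 0. Then for every x ∈ B_{r'}(0): (a) x̃_t ∈ B_r(0) for all t ∈ ℕ, and (b) ‖x̃_t − f_{π*}^t(x)‖ ≤ ℓ_f^u ((1 − ℓ^t)/(1 − ℓ)) (α ζ + ε) for all t ∈ ℕ. -/
/-!
STATEMENT 11: Robust stability under the perturbed learned policy. If `f` is
`ℓ_f^u`-Lipschitz in the control, `f_{π*}` is `ℓ`-Lipschitz on `B_r(0)` with `ℓ < 1`,
maps `B_r(0)` into itself and satisfies `f_{π*}(0) = 0`, `π̂` is `α`-Lipschitz with
`sup_{z ∈ B_r(0)} ‖π̂(z) − π*(z)‖ ≤ ε`, the perturbations satisfy `‖δ_t‖ ≤ ζ`, and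
`r' = r − ℓ_f^u (αζ + ε)/(1−ℓ) > 0`, then for every `x ∈ B_{r'}(0)` the perturbed
closed-loop trajectory `x̃_0 = x`, `x̃_{t+1} = f(x̃_t, π̂(x̃_t + δ_t))` satisfies
(a) `x̃_t ∈ B_r(0)` and (b) `‖x̃_t − f_{π*}^t(x)‖ ≤ ℓ_f^u ((1−ℓ^t)/(1−ℓ)) (αζ + ε)`.
-/

open Metric

/-!
The nominal closed loop `g = f_{π*}` is an `ℓ`-contraction on `B_r(0)` fixing `0`, so it maps
every smaller ball `B_s(0)` into itself and the nominal orbit of `x` stays in `B_{r'}(0)`.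
As long as the perturbed state lies in `B_r(0)`, one perturbed step differs from `g` by at most
`c = ℓ_f^u (αζ + ε)`, so the tracking error obeys `e_{t+1} ≤ c + ℓ e_t`, whence
`e_t ≤ c (1 − ℓ^t)/(1 − ℓ) ≤ c/(1 − ℓ) = r − r'`; this margin keeps the perturbed state in `B_r(0)`,
which closes the induction.
-/

section PerturbedContraction

variable {E : Type*} [SeminormedAddCommGroup E] {g : E → E} {r ℓ : ℝ}

theorem mapsTo_closedBall_of_lipschitzOn_closedBall
    (hg : ∀ a ∈ closedBall (0 : E) r, ∀ b ∈ closedBall (0 : E) r, ‖g a - g b‖ ≤ ℓ * ‖a - b‖)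
    (hg0 : g 0 = 0) (hℓ : ℓ ≤ 1) {s : ℝ} (hs : s ≤ r) :
    Set.MapsTo g (closedBall 0 s) (closedBall 0 s) := by
  intro y hy
  rw [mem_closedBall_zero_iff] at hy ⊢
  have hy_r : y ∈ closedBall (0 : E) r := mem_closedBall_zero_iff.2 (hy.trans hs)
  have h0_r : (0 : E) ∈ closedBall (0 : E) r := mem_closedBall_self ((norm_nonneg y).trans (hy.trans hs))
  calc ‖g y‖ = ‖g y - g 0‖ := by rw [hg0, sub_zero]
    _ ≤ ℓ * ‖y - 0‖ := hg y hy_r 0 h0_r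
    _ ≤ 1 * s := by rw [sub_zero]; exact mul_le_mul hℓ hy (norm_nonneg y) zero_le_one
    _ = s := one_mul s

theorem geometric_error_succ (hℓ : ℓ ≠ 1) (c : ℝ) (t : ℕ) :
    c + ℓ * (c * ((1 - ℓ ^ t) / (1 - ℓ))) = c * ((1 - ℓ ^ (t + 1)) / (1 - ℓ)) := by
  have : 1 - ℓ ≠ 0 := sub_ne_zero.2 (Ne.symm hℓ)
  field_simp
  ring

theorem geometric_error_le (hℓ0 : 0 ≤ ℓ) (hℓ1 : ℓ < 1) {c : ℝ} (hc : 0 ≤ c) (t : ℕ) :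
    c * ((1 - ℓ ^ t) / (1 - ℓ)) ≤ c / (1 - ℓ) := by
  rw [mul_div_assoc', div_le_div_iff_of_pos_right (by linarith)]
  nlinarith [pow_nonneg hℓ0 t]

theorem perturbed_orbit_mem_closedBall_and_norm_sub_iterate_le
    (hg : ∀ a ∈ closedBall (0 : E) r, ∀ b ∈ closedBall (0 : E) r, ‖g a - g b‖ ≤ ℓ * ‖a - b‖)
    (hg0 : g 0 = 0) (hℓ0 : 0 ≤ ℓ) (hℓ1 : ℓ < 1) {c : ℝ} (hc : 0 ≤ c) (y : ℕ → E)
    (hy0 : y 0 ∈ closedBall (0 : E) (r - c / (1 - ℓ)))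
    (hy : ∀ t, y t ∈ closedBall (0 : E) r → ‖y (t + 1) - g (y t)‖ ≤ c) (t : ℕ) :
    y t ∈ closedBall (0 : E) r ∧ ‖y t - g^[t] (y 0)‖ ≤ c * ((1 - ℓ ^ t) / (1 - ℓ)) := by
  have hmargin : r - c / (1 - ℓ) ≤ r := sub_le_self r (div_nonneg hc (by linarith))
  have horbit : ∀ t, g^[t] (y 0) ∈ closedBall (0 : E) (r - c / (1 - ℓ)) := fun t =>
    (mapsTo_closedBall_of_lipschitzOn_closedBall hg hg0 hℓ1.le hmargin).iterate t hy0
  induction t with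
  | zero => simpa using closedBall_subset_closedBall hmargin hy0
  | succ t ih =>
    obtain ⟨hyt, herr⟩ := ih
    have herr' : ‖y (t + 1) - g^[t + 1] (y 0)‖ ≤ c * ((1 - ℓ ^ (t + 1)) / (1 - ℓ)) := by
      rw [Function.iterate_succ_apply']
      calc ‖y (t + 1) - g (g^[t] (y 0))‖
          ≤ ‖y (t + 1) - g (y t)‖ + ‖g (y t) - g (g^[t] (y 0))‖ :=
            norm_sub_le_norm_sub_add_norm_sub _ _ _
        _ ≤ c + ℓ * (c * ((1 - ℓ ^ t) / (1 - ℓ))) := by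
            gcongr
            · exact hy t hyt
            · exact (hg _ hyt _ (closedBall_subset_closedBall hmargin (horbit t))).trans
                (mul_le_mul_of_nonneg_left herr hℓ0)
        _ = c * ((1 - ℓ ^ (t + 1)) / (1 - ℓ)) := geometric_error_succ hℓ1.ne c t
    refine ⟨?_, herr'⟩
    rw [mem_closedBall_zero_iff]
    have hnominal := mem_closedBall_zero_iff.1 (horbit (t + 1))
    linarith [norm_le_insert' (y (t + 1)) (g^[t + 1] (y 0)), geometric_error_le hℓ0 hℓ1 hc (t + 1)]

end PerturbedContraction

theorem norm_perturbed_control_sub_le {E U : Type*} [SeminormedAddCommGroup E]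
    [SeminormedAddCommGroup U] {πhat πstar : E → U} {α ε ζ : ℝ} (hα : 0 ≤ α)
    (hπhat_lip : ∀ x y, ‖πhat x - πhat y‖ ≤ α * ‖x - y‖) {z d : E}
    (hclose : ‖πhat z - πstar z‖ ≤ ε) (hd : ‖d‖ ≤ ζ) :
    ‖πhat (z + d) - πstar z‖ ≤ α * ζ + ε :=
  calc ‖πhat (z + d) - πstar z‖ ≤ ‖πhat (z + d) - πhat z‖ + ‖πhat z - πstar z‖ :=
        norm_sub_le_norm_sub_add_norm_sub _ _ _
    _ ≤ α * ‖z + d - z‖ + ε := add_le_add (hπhat_lip _ _) hclose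
    _ ≤ α * ζ + ε := by rw [add_sub_cancel_left]; gcongr

theorem robust_stability_learned_policy_general {n m : ℕ}
    (f : EuclideanSpace ℝ (Fin n) → EuclideanSpace ℝ (Fin m) → EuclideanSpace ℝ (Fin n))
    (ℓfu : ℝ) (hℓfu : 0 ≤ ℓfu)
    (hf_lip : ∀ x u₁ u₂, ‖f x u₁ - f x u₂‖ ≤ ℓfu * ‖u₁ - u₂‖)
    (r : ℝ)
    (πstar πhat : EuclideanSpace ℝ (Fin n) → EuclideanSpace ℝ (Fin m))
    (ℓ : ℝ) (hℓ0 : 0 ≤ ℓ) (hℓ1 : ℓ < 1)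
    (hstar_lip : ∀ x ∈ closedBall (0 : EuclideanSpace ℝ (Fin n)) r,
      ∀ y ∈ closedBall (0 : EuclideanSpace ℝ (Fin n)) r,
        ‖cloop f πstar x - cloop f πstar y‖ ≤ ℓ * ‖x - y‖)
    (hstar0 : cloop f πstar 0 = 0)
    (α ε ζ : ℝ) (hα : 0 ≤ α) (hε : 0 ≤ ε) (hζ : 0 ≤ ζ)
    (hπhat_lip : ∀ x y, ‖πhat x - πhat y‖ ≤ α * ‖x - y‖)
    (hclose : ∀ z ∈ closedBall (0 : EuclideanSpace ℝ (Fin n)) r, ‖πhat z - πstar z‖ ≤ ε)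
    (r' : ℝ) (hr' : r' = r - ℓfu * (α * ζ + ε) / (1 - ℓ))
    (x : EuclideanSpace ℝ (Fin n)) (hx : x ∈ closedBall (0 : EuclideanSpace ℝ (Fin n)) r')
    (δ : ℕ → EuclideanSpace ℝ (Fin n)) (hδ : ∀ t, ‖δ t‖ ≤ ζ)
    (xt : ℕ → EuclideanSpace ℝ (Fin n))
    (hx0 : xt 0 = x)
    (hrec : ∀ t, xt (t + 1) = f (xt t) (πhat (xt t + δ t))) :
    ∀ t : ℕ,
      xt t ∈ closedBall (0 : EuclideanSpace ℝ (Fin n)) r ∧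
      ‖xt t - (cloop f πstar)^[t] x‖ ≤ ℓfu * ((1 - ℓ ^ t) / (1 - ℓ)) * (α * ζ + ε) := by
  have hstep : ∀ t, xt t ∈ closedBall 0 r →
      ‖xt (t + 1) - cloop f πstar (xt t)‖ ≤ ℓfu * (α * ζ + ε) := fun t ht =>
    calc ‖xt (t + 1) - cloop f πstar (xt t)‖
        ≤ ℓfu * ‖πhat (xt t + δ t) - πstar (xt t)‖ := by rw [hrec t]; exact hf_lip _ _ _
      _ ≤ ℓfu * (α * ζ + ε) := by
          gcongr
          exact norm_perturbed_control_sub_le hα hπhat_lip (hclose _ ht) (hδ t)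
  subst hx0 hr'
  intro t
  obtain ⟨hmem, herr⟩ := perturbed_orbit_mem_closedBall_and_norm_sub_iterate_le hstar_lip hstar0
    hℓ0 hℓ1 (by positivity) xt hx hstep t
  exact ⟨hmem, herr.trans_eq (by ring)⟩

theorem robust_stability_learned_policy {n m : ℕ}
    (f : EuclideanSpace ℝ (Fin n) → EuclideanSpace ℝ (Fin m) → EuclideanSpace ℝ (Fin n))
    (ℓfu : ℝ) (hℓfu : 0 ≤ ℓfu)
    (hf_lip : ∀ x u₁ u₂, ‖f x u₁ - f x u₂‖ ≤ ℓfu * ‖u₁ - u₂‖)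
    (r : ℝ)
    (πstar πhat : EuclideanSpace ℝ (Fin n) → EuclideanSpace ℝ (Fin m))
    (ℓ : ℝ) (hℓ0 : 0 ≤ ℓ) (hℓ1 : ℓ < 1)
    (hstar_lip : ∀ x ∈ closedBall (0 : EuclideanSpace ℝ (Fin n)) r,
      ∀ y ∈ closedBall (0 : EuclideanSpace ℝ (Fin n)) r,
        ‖cloop f πstar x - cloop f πstar y‖ ≤ ℓ * ‖x - y‖)
    (hstar_inv : ∀ x ∈ closedBall (0 : EuclideanSpace ℝ (Fin n)) r,
      cloop f πstar x ∈ closedBall (0 : EuclideanSpace ℝ (Fin n)) r)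
    (hstar0 : cloop f πstar 0 = 0)
    (α ε ζ : ℝ) (hα : 0 ≤ α) (hε : 0 ≤ ε) (hζ : 0 ≤ ζ)
    (hπhat_lip : ∀ x y, ‖πhat x - πhat y‖ ≤ α * ‖x - y‖)
    (hclose : ∀ z ∈ closedBall (0 : EuclideanSpace ℝ (Fin n)) r, ‖πhat z - πstar z‖ ≤ ε)
    (r' : ℝ) (hr' : r' = r - ℓfu * (α * ζ + ε) / (1 - ℓ)) (hr'pos : 0 < r')
    (x : EuclideanSpace ℝ (Fin n)) (hx : x ∈ closedBall (0 : EuclideanSpace ℝ (Fin n)) r')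
    (δ : ℕ → EuclideanSpace ℝ (Fin n)) (hδ : ∀ t, ‖δ t‖ ≤ ζ)
    (xt : ℕ → EuclideanSpace ℝ (Fin n))
    (hx0 : xt 0 = x)
    (hrec : ∀ t, xt (t + 1) = f (xt t) (πhat (xt t + δ t))) :
    ∀ t : ℕ,
      xt t ∈ closedBall (0 : EuclideanSpace ℝ (Fin n)) r ∧
      ‖xt t - (cloop f πstar)^[t] x‖ ≤ ℓfu * ((1 - ℓ ^ t) / (1 - ℓ)) * (α * ζ + ε) :=
  robust_stability_learned_policy_general f ℓfu hℓfu hf_lip r πstar πhat ℓ hℓ0 hℓ1 hstar_lip hstar0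
    α ε ζ hα hε hζ hπhat_lip hclose r' hr' x hx δ hδ xt hx0 hrec
end
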